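/- Let g(x) = arctan( x·(1+x²)^{−1/4} ) and for η > 0 define f(x) = ( 1 − iη·g'(x) )^{−1}. Then there exists η₀ ∈ (0,1) such that for every η ∈ (0, η₀], every δ ∈ [0, π/2], and every x ∈ ℝ: Re( e^{−i(π/2 − δ)}·f(x)² ) ≥ η·(cos δ)·(1+x²)^{1/4} / ( x² + (1+x²)^{1/2} ). -/

import Mathlib

/-!
With `q = (1 + x²)^{1/4}` one has `g'(x) = (1 + x²/2) / (q³ (q² + x²))`, and `A = η g'(x)`
satisfies `A q³ ≤ η` because `q ≥ 1`. For `f = (1 - iA)⁻¹`,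
`Re (e^{-i(π/2-δ)} f²) = sin δ · Re f² + cos δ · Im f²`, where `Re f² = (1 - A²)/(1 + A²)² ≥ 0`
as `A ≤ 1`, and `Im f² = 2A/(1 + A²)²`. Since `2 (1 + x²/2) = 1 + q⁴`, the bound
`η q / (x² + q²) ≤ Im f²` is equivalent to `q⁴ (1 + A²)² ≤ 1 + q⁴`, which holds as soon as `A q³ ≤ 1/2`;
hence `η₀ = 1/2` works.
-/

open scoped Real

lemma rpow_one_div_four_pow_four {t : ℝ} (ht : 0 ≤ t) : (t ^ (1 / 4 : ℝ)) ^ 4 = t := by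
  simpa using Real.rpow_inv_natCast_pow ht (n := 4) (by norm_num)

lemma rpow_one_div_two_eq_sq {t : ℝ} (ht : 0 ≤ t) : t ^ (1 / 2 : ℝ) = (t ^ (1 / 4 : ℝ)) ^ 2 := by
  rw [← Real.rpow_mul_natCast ht]
  norm_num

lemma hasDerivAt_arctan_mul_one_add_sq_rpow (x : ℝ) :
    HasDerivAt (fun y : ℝ => Real.arctan (y * (1 + y ^ 2) ^ (-(1 / 4 : ℝ))))
      ((1 + x ^ 2 / 2) / ((1 + x ^ 2) ^ (1 / 4 : ℝ)) ^ 3 /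
        (((1 + x ^ 2) ^ (1 / 4 : ℝ)) ^ 2 + x ^ 2)) x := by
  have ht : 0 < 1 + x ^ 2 := by positivity
  have hpow : HasDerivAt (fun y : ℝ => (1 + y ^ 2) ^ (-(1 / 4 : ℝ)))
      (2 * x * (-(1 / 4)) * (1 + x ^ 2) ^ (-(1 / 4 : ℝ) - 1)) x := by
    simpa using ((hasDerivAt_pow 2 x).const_add 1).rpow_const (p := -(1 / 4 : ℝ)) (Or.inl ht.ne')
  refine ((Real.hasDerivAt_arctan _).comp x ((hasDerivAt_id x).mul hpow)).congr_deriv ?_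
  rw [Pi.mul_apply, id_eq, Real.rpow_sub_one ht.ne', Real.rpow_neg ht.le]
  set q := (1 + x ^ 2) ^ (1 / 4 : ℝ)
  have hq : 0 < q := by positivity
  have hq4 : q ^ 4 = 1 + x ^ 2 := rpow_one_div_four_pow_four ht.le
  field_simp
  linear_combination 4 * (x ^ 2 + 2) * hq4

namespace Complex

lemma re_exp_neg_I_mul_pi_div_two_sub_mul (δ : ℝ) (z : ℂ) :
    (exp (-(I * ((π : ℂ) / 2 - δ))) * z).re = Real.sin δ * z.re + Real.cos δ * z.im := by
  have h : -(I * ((π : ℂ) / 2 - δ)) = ((δ - π / 2 : ℝ) : ℂ) * I := by push_cast; ring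
  rw [h, exp_mul_I, ← ofReal_cos, ← ofReal_sin, Real.cos_sub_pi_div_two, Real.sin_sub_pi_div_two]
  simp only [add_mul, add_re, mul_re, mul_im, ofReal_re, ofReal_im, I_re, I_im]
  ring

lemma inv_one_sub_I_mul_sq (a : ℝ) :
    ((1 - I * a)⁻¹) ^ 2 = ⟨(1 - a ^ 2) / (1 + a ^ 2) ^ 2, 2 * a / (1 + a ^ 2) ^ 2⟩ := by
  have h : (1 - I * a)⁻¹ = ⟨1 / (1 + a ^ 2), a / (1 + a ^ 2)⟩ := by
    refine inv_eq_of_mul_eq_one_right (Complex.ext ?_ ?_) <;> simp <;> field_simp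
    ring
  rw [h]
  apply Complex.ext <;> simp [sq] <;> field_simp
  ring

end Complex

lemma pow_four_mul_one_add_sq_sq_le {A q : ℝ} (hA : 0 ≤ A) (hq : 1 ≤ q)
    (h : A * q ^ 3 ≤ 1 / 2) : q ^ 4 * (1 + A ^ 2) ^ 2 ≤ 1 + q ^ 4 := by
  have hA' : A ≤ 1 / 2 := le_trans (le_mul_of_one_le_right hA (one_le_pow₀ hq)) h
  have hAq : A ^ 2 * q ^ 4 ≤ 1 / 4 := by
    have : A ^ 2 * q ^ 4 ≤ (A * q ^ 3) ^ 2 := by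
      rw [mul_pow, ← pow_mul]
      exact mul_le_mul_of_nonneg_left (pow_le_pow_right₀ hq (by norm_num)) (sq_nonneg A)
    nlinarith [mul_nonneg hA (pow_nonneg (zero_le_one.trans hq) 3)]
  nlinarith [mul_le_mul hAq (pow_le_pow_left₀ hA hA' 2) (sq_nonneg A) (by norm_num)]

section

variable {q x η A : ℝ}

lemma one_le_of_pow_four_eq (hq4 : q ^ 4 = 1 + x ^ 2) (hq : 0 < q) : 1 ≤ q :=
  le_of_pow_le_pow_left₀ (n := 4) (by norm_num) hq.le
    (by rw [one_pow, hq4]; nlinarith [sq_nonneg x])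

lemma mul_pow_three_le (hq4 : q ^ 4 = 1 + x ^ 2) (hq : 0 < q) (hη : 0 ≤ η)
    (hA : A * q ^ 3 * (q ^ 2 + x ^ 2) = η * (1 + x ^ 2 / 2)) : A * q ^ 3 ≤ η := by
  have hq2 : 1 ≤ q ^ 2 := one_le_pow₀ (one_le_of_pow_four_eq hq4 hq)
  refine le_of_mul_le_mul_right ?_ (by positivity : 0 < q ^ 2 + x ^ 2)
  rw [hA]
  nlinarith

lemma mul_div_le_two_mul_div_one_add_sq_sq (hq4 : q ^ 4 = 1 + x ^ 2) (hq : 0 < q) (hη : 0 ≤ η)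
    (hA0 : 0 ≤ A) (hA : A * q ^ 3 * (q ^ 2 + x ^ 2) = η * (1 + x ^ 2 / 2))
    (hAq : A * q ^ 3 ≤ 1 / 2) :
    η * (q / (x ^ 2 + q ^ 2)) ≤ 2 * A / (1 + A ^ 2) ^ 2 := by
  have hkey := pow_four_mul_one_add_sq_sq_le hA0 (one_le_of_pow_four_eq hq4 hq) hAq
  rw [mul_div_assoc', div_le_div_iff₀ (by positivity) (by positivity)]
  refine le_of_mul_le_mul_right ?_ (pow_pos hq 3)
  calc η * q * (1 + A ^ 2) ^ 2 * q ^ 3 = η * (q ^ 4 * (1 + A ^ 2) ^ 2) := by ring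
    _ ≤ η * (1 + q ^ 4) := mul_le_mul_of_nonneg_left hkey hη
    _ = 2 * A * (x ^ 2 + q ^ 2) * q ^ 3 := by linear_combination η * hq4 - 2 * hA

end

/-- Estimate (3.12): for `η` small enough and `δ ∈ [0, π/2]`, the rotated weight
`Re(e^{−i(π/2−δ)}f²)` of the kinetic term of the distorted operator dominates
`η·cos δ·w(x)`, where `f = (1 − iη g')^{−1}`, `g(x) = arctan(x·(1+x²)^{−1/4})` and
`w(x) = (1+x²)^{1/4}/(x²+(1+x²)^{1/2})`. -/
theorem rotated_f_squared_lower_bound :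
    ∃ η₀ ∈ Set.Ioo (0 : ℝ) 1, ∀ η : ℝ, 0 < η → η ≤ η₀ →
      ∀ δ : ℝ, δ ∈ Set.Icc (0 : ℝ) (π / 2) → ∀ x : ℝ,
        η * Real.cos δ * ((1 + x ^ 2) ^ ((1 : ℝ) / 4)
            / (x ^ 2 + (1 + x ^ 2) ^ ((1 : ℝ) / 2)))
          ≤ (Complex.exp (-(Complex.I * ((π : ℂ) / 2 - (δ : ℂ)))) *
              (((1 : ℂ) - Complex.I * (η : ℂ) *
                ((deriv (fun y : ℝ =>
                    Real.arctan (y * (1 + y ^ 2) ^ (-(1 / 4 : ℝ)))) x : ℝ) : ℂ))⁻¹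
                  ^ 2)).re := by
  refine ⟨1 / 2, ⟨by norm_num, by norm_num⟩, fun η hη hη₀ δ ⟨hδ₀, hδ₁⟩ x => ?_⟩
  have ht : (0 : ℝ) ≤ 1 + x ^ 2 := by positivity
  rw [(hasDerivAt_arctan_mul_one_add_sq_rpow x).deriv, rpow_one_div_two_eq_sq ht, mul_assoc Complex.I,
    ← Complex.ofReal_mul, Complex.re_exp_neg_I_mul_pi_div_two_sub_mul,
    Complex.inv_one_sub_I_mul_sq]
  set q := (1 + x ^ 2) ^ (1 / 4 : ℝ)
  set A := η * ((1 + x ^ 2 / 2) / q ^ 3 / (q ^ 2 + x ^ 2))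
  have hq : 0 < q := by positivity
  have hq4 : q ^ 4 = 1 + x ^ 2 := rpow_one_div_four_pow_four ht
  have hA0 : 0 ≤ A := by positivity
  have hA : A * q ^ 3 * (q ^ 2 + x ^ 2) = η * (1 + x ^ 2 / 2) := by simp only [A]; field_simp
  have hAq : A * q ^ 3 ≤ η := mul_pow_three_le hq4 hq hη.le hA
  have hA1 : A ≤ 1 := by
    have := le_mul_of_one_le_right hA0 (one_le_pow₀ (n := 3) (one_le_of_pow_four_eq hq4 hq))
    linarith
  have hre : 0 ≤ (1 - A ^ 2) / (1 + A ^ 2) ^ 2 := div_nonneg (by nlinarith) (by positivity)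
  have him := mul_div_le_two_mul_div_one_add_sq_sq hq4 hq hη.le hA0 hA (hAq.trans hη₀)
  have hsin : 0 ≤ Real.sin δ := Real.sin_nonneg_of_nonneg_of_le_pi hδ₀ (by linarith [Real.pi_pos])
  have hcos : 0 ≤ Real.cos δ := Real.cos_nonneg_of_mem_Icc ⟨by linarith, hδ₁⟩
  calc η * Real.cos δ * (q / (x ^ 2 + q ^ 2))
      = Real.cos δ * (η * (q / (x ^ 2 + q ^ 2))) := by ring
    _ ≤ Real.cos δ * (2 * A / (1 + A ^ 2) ^ 2) := mul_le_mul_of_nonneg_left him hcos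
    _ ≤ Real.sin δ * ((1 - A ^ 2) / (1 + A ^ 2) ^ 2)
          + Real.cos δ * (2 * A / (1 + A ^ 2) ^ 2) :=
      le_add_of_nonneg_left (mul_nonneg hsin hre)
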